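/- Let Γ be a totally ordered abelian group that is an n-dimensional ℚ-vector space, with canonical valuation ν on ℂ((Γ)). For a ℚ-basis γ₁,…,γ_n of Γ and elements y₁,…,y_n ∈ ℂ((Γ)) with ν(y_i) = γ_i, define, for a top form ω = f · dy₁∧⋯∧dy_n ∈ Λⁿ Ω¹_top(ℂ((Γ))/ℂ), the value ν(ω) := ν(f) + γ₁ + ⋯ + γ_n. Then ν(ω) is independent of the choice of ℚ-basis (γ_i) and of the elements (y_i); moreover ν(ω₁+ω₂) ≥ min(ν(ω₁), ν(ω₂)) and ν(g·ω) = ν(g) + ν(ω). -/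

import Mathlib

set_option synthInstance.maxHeartbeats 1000000
set_option maxHeartbeats 1000000

open scoped TensorProduct

noncomputable section

variable (Γ : Type*) [AddCommGroup Γ] [LinearOrder Γ] [IsOrderedAddMonoid Γ] [Module ℚ Γ]

/-- The generalized Laurent series field `ℂ((Γ))` (Hahn series with well-ordered support). -/
abbrev LaurentField : Type _ := HahnSeries Γ ℂ

/-- `ℂ((Γ)) ⊗_ℂ ℂ((Γ))`, regarded as a module over `ℂ((Γ))` via the first tensor factor. -/
abbrev TensorSq : Type _ := LaurentField Γ ⊗[ℂ] LaurentField Γ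

variable {Γ}

/-- The differential `d¹f`, i.e. the class of `1 ⊗ f` in `Ω¹_top = (R ⊗_ℂ R)/M_FD`. -/
def formDiff (MFD : @Submodule (LaurentField Γ) (TensorSq Γ) _
      (@AddCommGroup.toAddCommMonoid _ inferInstance) inferInstance)
    (f : LaurentField Γ) : TensorSq Γ ⧸ MFD :=
  Submodule.Quotient.mk (1 ⊗ₜ[ℂ] f)

/-- The top differential form `d¹y₁ ∧ d¹y₂ ∧ ⋯ ∧ d¹y_n`, as an element of the exterior
algebra of `Ω¹_top(ℂ((Γ))/ℂ)` over `ℂ((Γ))`. -/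
def topForm {n : ℕ} (MFD : @Submodule (LaurentField Γ) (TensorSq Γ) _
      (@AddCommGroup.toAddCommMonoid _ inferInstance) inferInstance)
    (y : Fin n → LaurentField Γ) :
    ExteriorAlgebra (LaurentField Γ) (TensorSq Γ ⧸ MFD) :=
  (List.ofFn fun i => ExteriorAlgebra.ι (LaurentField Γ) (formDiff MFD (y i))).prod

/-- `y₁, …, y_n` are admissible if they are nonzero and their values
`γ_i = ν(y_i)` (the orders) form a `ℚ`-basis of `Γ`. -/
def Admissible {n : ℕ} (y : Fin n → LaurentField Γ) : Prop :=
  (∀ i, y i ≠ 0) ∧ ∃ b : Module.Basis (Fin n) ℚ Γ, ∀ i, b i = (y i).order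

/-!
The formal partial derivatives `∂ⱼ` kill the generators of `M_FD`, so `u ⊗ v ↦ (u ∂ⱼ v)ⱼ`
descends to `Ω¹_top → ℂ((Γ))ⁿ`; the determinant of `n` such vectors is alternating, hence gives a
`ℂ((Γ))`-linear functional `c` on `⋀ Ω¹_top` with `c (f • dy₁ ∧ ⋯ ∧ dyₙ) = f · det (∂ⱼ yᵢ)`.
Multiplying column `j` by `xⱼ = X ^ e⁻¹(eⱼ)` turns `∂ⱼ` into the Euler operator, which scales
the coefficient of `X ^ δ` by `δⱼ`. Hence `det (xⱼ ∂ⱼ yᵢ)` has no terms below `Σ ν(yᵢ)`, and its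
coefficient there is `det (ν(yᵢ)ⱼ) · ∏ lc(yᵢ) ≠ 0` because the `ν(yᵢ)` form a basis. So
`ν(f) + Σ ν(yᵢ) = ν(c ω) + Σ ν(xⱼ)` only depends on `ω`, and `ω ↦ ν(c ω) + Σ ν(xⱼ)` is the
required valuation.
-/
open HahnSeries

namespace HahnSeries

variable {Λ R ι : Type*} [AddCommMonoid Λ] [LinearOrder Λ]

theorem eq_zero_iff_of_orderTop_add_eq [Zero R] {x y : R⟦Λ⟧} {a b : Λ}
    (h : x.orderTop + a = y.orderTop + b) : x = 0 ↔ y = 0 := by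
  have key : ∀ (z : R⟦Λ⟧) (c : Λ), z = 0 ↔ z.orderTop + c = ⊤ := by simp [WithTop.add_eq_top]
  rw [key x a, key y b, h]

variable [IsOrderedCancelAddMonoid Λ]

theorem coeff_mul_add_of_le_orderTop [NonUnitalNonAssocSemiring R] {x y : R⟦Λ⟧} {a b : Λ}
    (ha : (a : WithTop Λ) ≤ x.orderTop) (hb : (b : WithTop Λ) ≤ y.orderTop) :
    (x * y).coeff (a + b) = x.coeff a * y.coeff b := by
  have hbelow : ((a + b : Λ) : WithTop Λ) < x.orderTop + y.orderTop → (x * y).coeff (a + b) = 0 :=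
    fun h => coeff_eq_zero_of_lt_orderTop (h.trans_le orderTop_add_le_mul)
  rcases ha.lt_or_eq with ha | ha
  · rw [coeff_eq_zero_of_lt_orderTop ha, zero_mul,
      hbelow (WithTop.add_lt_add_of_lt_of_le WithTop.coe_ne_top ha hb)]
  rcases hb.lt_or_eq with hb | hb
  · rw [coeff_eq_zero_of_lt_orderTop hb, mul_zero,
      hbelow (WithTop.add_lt_add_of_le_of_lt WithTop.coe_ne_top ha.le hb)]
  have hx : x ≠ 0 := orderTop_ne_top.mp (ha ▸ WithTop.coe_ne_top)
  have hy : y ≠ 0 := orderTop_ne_top.mp (hb ▸ WithTop.coe_ne_top)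
  rw [← order_eq_orderTop_of_ne_zero hx, WithTop.coe_eq_coe] at ha
  rw [← order_eq_orderTop_of_ne_zero hy, WithTop.coe_eq_coe] at hb
  rw [ha, hb, coeff_mul_order_add_order, leadingCoeff_eq, leadingCoeff_eq]

section CommSemiring

variable [CommSemiring R]

theorem sum_le_orderTop_prod (s : Finset ι) (x : ι → R⟦Λ⟧) (γ : ι → Λ)
    (h : ∀ i ∈ s, (γ i : WithTop Λ) ≤ (x i).orderTop) :
    ((∑ i ∈ s, γ i : Λ) : WithTop Λ) ≤ (∏ i ∈ s, x i).orderTop := by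
  classical
  induction s using Finset.induction with
  | empty =>
    rw [Finset.sum_empty, Finset.prod_empty, ← single_zero_one]
    exact orderTop_single_le
  | insert j s hj ih =>
    rw [Finset.sum_insert hj, Finset.prod_insert hj, WithTop.coe_add]
    exact (add_le_add (h j (Finset.mem_insert_self j s))
      (ih fun i hi => h i (Finset.mem_insert_of_mem hi))).trans orderTop_add_le_mul

theorem coeff_prod_sum_of_le_orderTop (s : Finset ι) (x : ι → R⟦Λ⟧) (γ : ι → Λ)
    (h : ∀ i ∈ s, (γ i : WithTop Λ) ≤ (x i).orderTop) :
    (∏ i ∈ s, x i).coeff (∑ i ∈ s, γ i) = ∏ i ∈ s, (x i).coeff (γ i) := by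
  classical
  induction s using Finset.induction with
  | empty => simp [← single_zero_one]
  | insert j s hj ih =>
    have hs : ∀ i ∈ s, (γ i : WithTop Λ) ≤ (x i).orderTop :=
      fun i hi => h i (Finset.mem_insert_of_mem hi)
    rw [Finset.sum_insert hj, Finset.prod_insert hj, Finset.prod_insert hj,
      coeff_mul_add_of_le_orderTop (h j (Finset.mem_insert_self j s))
        (sum_le_orderTop_prod s x γ hs), ih hs]

theorem orderTop_prod [NoZeroDivisors R] [Nontrivial R] (s : Finset ι) (x : ι → R⟦Λ⟧) :
    (∏ i ∈ s, x i).orderTop = ∑ i ∈ s, (x i).orderTop := by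
  classical
  induction s using Finset.induction with
  | empty => simp
  | insert j s hj ih => rw [Finset.prod_insert hj, Finset.sum_insert hj, orderTop_mul, ih]

end CommSemiring

section Det

variable [CommRing R] [Fintype ι] [DecidableEq ι]

theorem coeff_det (M : Matrix ι ι R⟦Λ⟧) (δ : Λ) :
    M.det.coeff δ = ∑ σ : Equiv.Perm ι, Equiv.Perm.sign σ • (∏ i, M (σ i) i).coeff δ := by
  simp only [Matrix.det_apply, ← coeff.addMonoidHom_apply, map_sum, Units.smul_def, map_zsmul]

theorem sum_le_orderTop_det {M : Matrix ι ι R⟦Λ⟧} {γ : ι → Λ}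
    (h : ∀ i j, (γ i : WithTop Λ) ≤ (M i j).orderTop) :
    ((∑ i, γ i : Λ) : WithTop Λ) ≤ M.det.orderTop := by
  refine le_orderTop_iff_forall.mpr fun δ hδ => ?_
  rw [coeff_det]
  refine Finset.sum_eq_zero fun σ _ => ?_
  have hσ := sum_le_orderTop_prod Finset.univ (fun i => M (σ i) i) (fun i => γ (σ i))
    fun i _ => h (σ i) i
  rw [Equiv.sum_comp σ γ] at hσ
  rw [coeff_eq_zero_of_lt_orderTop (hδ.trans_le hσ), smul_zero]

theorem coeff_sum_det {M : Matrix ι ι R⟦Λ⟧} {γ : ι → Λ}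
    (h : ∀ i j, (γ i : WithTop Λ) ≤ (M i j).orderTop) :
    M.det.coeff (∑ i, γ i) = (Matrix.of fun i j => (M i j).coeff (γ i)).det := by
  rw [coeff_det, Matrix.det_apply]
  refine Finset.sum_congr rfl fun σ _ => ?_
  rw [← Equiv.sum_comp σ γ,
    coeff_prod_sum_of_le_orderTop _ (fun i => M (σ i) i) (fun i => γ (σ i)) fun i _ => h (σ i) i]
  rfl

theorem orderTop_det_eq_sum {M : Matrix ι ι R⟦Λ⟧} {γ : ι → Λ}
    (h : ∀ i j, (γ i : WithTop Λ) ≤ (M i j).orderTop)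
    (hc : (Matrix.of fun i j => (M i j).coeff (γ i)).det ≠ 0) :
    M.det.orderTop = (∑ i, γ i : Λ) :=
  le_antisymm (orderTop_le_of_coeff_ne_zero (coeff_sum_det h ▸ hc)) (sum_le_orderTop_det h)

end Det

end HahnSeries

theorem LinearIndependent.det_of_coords_ne_zero {K V ι : Type*} [Field K] [AddCommGroup V]
    [Module K V] [Fintype ι] [DecidableEq ι] (e : V ≃ₗ[K] (ι → K)) {v : ι → V}
    (hv : LinearIndependent K v) : (Matrix.of fun i j => e (v i) j).det ≠ 0 := by
  have hrows : LinearIndependent K (Matrix.of fun i j => e (v i) j).row :=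
    hv.map' e.toLinearMap e.ker
  exact (Matrix.isUnit_iff_isUnit_det _).mp (Matrix.linearIndependent_rows_iff_isUnit.mp hrows)
    |>.ne_zero

/-- `D i` is the formal partial derivative `∂/∂xᵢ` with respect to `xᵢ = X ^ e⁻¹(eᵢ)`. -/
def IsFormalPartialDeriv {K : Type*} [Field K] {n : ℕ} (e : Γ ≃ₗ[ℚ] (Fin n → ℚ))
    (D : Fin n → K⟦Γ⟧ → K⟦Γ⟧) : Prop :=
  ∀ (i : Fin n) (f : K⟦Γ⟧) (γ : Γ),
    (D i f).coeff γ = ((e γ i + 1 : ℚ) : K) * f.coeff (γ + e.symm (Pi.single i 1))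

def jacobianMatrix {R : Type*} {n : ℕ} (D : Fin n → R → R) (y : Fin n → R) :
    Matrix (Fin n) (Fin n) R :=
  Matrix.of fun i j => D j (y i)

namespace IsFormalPartialDeriv

section Field

variable {K : Type*} [Field K] {n : ℕ} {e : Γ ≃ₗ[ℚ] (Fin n → ℚ)} {D : Fin n → K⟦Γ⟧ → K⟦Γ⟧}

def linearMap (hD : IsFormalPartialDeriv e D) (i : Fin n) : K⟦Γ⟧ →ₗ[K] K⟦Γ⟧ where
  toFun := D i
  map_add' f g := by
    ext γ
    rw [coeff_add, hD, hD, hD, coeff_add, mul_add]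
  map_smul' c f := by
    ext γ
    rw [coeff_smul, hD, hD, coeff_smul, smul_eq_mul, smul_eq_mul, RingHom.id_apply, mul_left_comm]

theorem coeff_single_mul (hD : IsFormalPartialDeriv e D) (j : Fin n) (f : K⟦Γ⟧) (δ : Γ) :
    (single (e.symm (Pi.single j 1)) (1 : K) * D j f).coeff δ = (e δ j : K) * f.coeff δ := by
  rw [← sub_add_cancel δ (e.symm (Pi.single j 1)), coeff_single_mul_add, one_mul, hD,
    sub_add_cancel, map_sub, LinearEquiv.apply_symm_apply]
  simp

theorem apply_single (hD : IsFormalPartialDeriv e D) (i j : Fin n) :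
    D i (single (e.symm (Pi.single j 1)) (1 : K)) = if i = j then 1 else 0 := by
  ext γ
  rw [hD, coeff_single]
  by_cases hγ : γ + e.symm (Pi.single i 1) = e.symm (Pi.single j 1)
  · have hγ' : e γ = Pi.single j 1 - Pi.single i 1 := by
      rw [eq_sub_iff_add_eq, ← LinearEquiv.apply_symm_apply e (Pi.single i 1), ← map_add, hγ,
        LinearEquiv.apply_symm_apply]
    by_cases hij : i = j
    · subst hij
      simp_all
    · simp [hγ', hij]
  · rw [if_neg hγ, mul_zero]
    split_ifs with hij
    · subst hij
      rw [coeff_one, if_neg]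
      rintro rfl
      exact hγ (zero_add _)
    · rfl

theorem orderTop_det_jacobianMatrix [CharZero K] (hD : IsFormalPartialDeriv e D)
    {y : Fin n → K⟦Γ⟧} (hy : ∀ i, y i ≠ 0) (hli : LinearIndependent ℚ fun i => (y i).order) :
    (jacobianMatrix D y).det.orderTop + ((∑ j, e.symm (Pi.single j 1) : Γ) : WithTop Γ) =
      ((∑ i, (y i).order : Γ) : WithTop Γ) := by
  set x : Fin n → K⟦Γ⟧ := fun j => single (e.symm (Pi.single j 1)) 1
  have hleading : ∀ i j, (x j * D j (y i)).coeff (y i).order =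
      (y i).leadingCoeff * (Rat.castHom K).mapMatrix (.of fun i j => e (y i).order j) i j :=
    fun i j => by
      rw [hD.coeff_single_mul, leadingCoeff_eq, mul_comm]
      simp
  have hEuler : (Matrix.of fun i j => x j * jacobianMatrix D y i j).det.orderTop =
      ((∑ i, (y i).order : Γ) : WithTop Γ) := by
    refine orderTop_det_eq_sum (fun i j => le_orderTop_iff_forall.mpr fun δ hδ => ?_) ?_
    · rw [Matrix.of_apply, jacobianMatrix, Matrix.of_apply, hD.coeff_single_mul,
        coeff_eq_zero_of_lt_order (WithTop.coe_lt_coe.mp hδ), mul_zero]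
    · simp only [Matrix.of_apply, jacobianMatrix, hleading]
      rw [Matrix.det_mul_column, ← RingHom.map_det]
      exact mul_ne_zero (Finset.prod_ne_zero_iff.mpr fun i _ => leadingCoeff_ne_zero.mpr (hy i))
        ((map_ne_zero _).mpr (hli.det_of_coords_ne_zero e))
  rw [Matrix.det_mul_row, orderTop_mul, orderTop_prod, add_comm] at hEuler
  simpa [x, orderTop_single, WithTop.coe_sum] using hEuler

end Field

section Complex

variable {n : ℕ} {e : Γ ≃ₗ[ℚ] (Fin n → ℚ)} {D : Fin n → LaurentField Γ → LaurentField Γ}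
  (hD : IsFormalPartialDeriv e D)

def gradient : TensorSq Γ →ₗ[LaurentField Γ] (Fin n → LaurentField Γ) :=
  TensorProduct.AlgebraTensorModule.lift
    (LinearMap.toSpanSingleton (LaurentField Γ) _ (LinearMap.pi hD.linearMap))

theorem gradient_tmul (u v : LaurentField Γ) : hD.gradient (u ⊗ₜ[ℂ] v) = u • fun j => D j v :=
  rfl

theorem span_le_ker_gradient :
    Submodule.span (LaurentField Γ)
        {x | ∃ f : LaurentField Γ, x = 1 ⊗ₜ[ℂ] f -
          ∑ i : Fin n, (D i f) ⊗ₜ[ℂ] (single (e.symm (Pi.single i 1)) (1 : ℂ))} ≤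
      LinearMap.ker hD.gradient := by
  rw [Submodule.span_le]
  rintro _ ⟨f, rfl⟩
  ext j
  simp [gradient_tmul, hD.apply_single]

variable (MFD : @Submodule (LaurentField Γ) (TensorSq Γ) _
    (@AddCommGroup.toAddCommMonoid _ inferInstance) inferInstance)
  (hMFD : MFD ≤ LinearMap.ker hD.gradient)

/-- The coefficient of a top form with respect to `dx₁ ∧ ⋯ ∧ dxₙ`, where `xᵢ = X ^ e⁻¹(eᵢ)`. -/
def coeffDx :
    ExteriorAlgebra (LaurentField Γ) (TensorSq Γ ⧸ MFD) →ₗ[LaurentField Γ] LaurentField Γ :=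
  ExteriorAlgebra.liftAlternating
    (Pi.single n (Matrix.detRowAlternating.compLinearMap (MFD.liftQ hD.gradient hMFD)))

theorem coeffDx_topForm (y : Fin n → LaurentField Γ) :
    hD.coeffDx MFD hMFD (topForm MFD y) = (jacobianMatrix D y).det := by
  rw [topForm, ← ExteriorAlgebra.ιMulti_apply, coeffDx,
    ExteriorAlgebra.liftAlternating_apply_ιMulti, Pi.single_eq_same,
    AlternatingMap.compLinearMap_apply]
  exact congrArg Matrix.det (Matrix.ext fun i j => one_mul (D j (y i)))

def formValuation (ω : ExteriorAlgebra (LaurentField Γ) (TensorSq Γ ⧸ MFD)) : WithTop Γ :=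
  (hD.coeffDx MFD hMFD ω).orderTop + ((∑ j, e.symm (Pi.single j 1) : Γ) : WithTop Γ)

theorem formValuation_zero : hD.formValuation MFD hMFD 0 = ⊤ := by
  simp [formValuation]

theorem formValuation_smul_topForm (f : LaurentField Γ) {y : Fin n → LaurentField Γ}
    (hy : Admissible y) :
    hD.formValuation MFD hMFD (f • topForm MFD y) =
      f.orderTop + ((∑ i, (y i).order : Γ) : WithTop Γ) := by
  obtain ⟨b, hb⟩ := hy.2
  rw [formValuation, map_smul, hD.coeffDx_topForm, smul_eq_mul, orderTop_mul, add_assoc,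
    hD.orderTop_det_jacobianMatrix hy.1 (funext hb ▸ b.linearIndependent)]

theorem min_formValuation_le_add (ω₁ ω₂ : ExteriorAlgebra (LaurentField Γ) (TensorSq Γ ⧸ MFD)) :
    min (hD.formValuation MFD hMFD ω₁) (hD.formValuation MFD hMFD ω₂) ≤
      hD.formValuation MFD hMFD (ω₁ + ω₂) := by
  rw [formValuation, formValuation, formValuation, map_add, min_add_add_right]
  gcongr
  exact min_orderTop_le_orderTop_add

theorem formValuation_smul (g : LaurentField Γ)
    (ω : ExteriorAlgebra (LaurentField Γ) (TensorSq Γ ⧸ MFD)) :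
    hD.formValuation MFD hMFD (g • ω) = g.orderTop + hD.formValuation MFD hMFD ω := by
  rw [formValuation, formValuation, map_smul, smul_eq_mul, orderTop_mul, add_assoc]

end Complex

end IsFormalPartialDeriv

/-- Let `Γ` be a totally ordered abelian group which is an `n`-dimensional
`ℚ`-vector space (an isomorphism `e : Γ ≅ ℚⁿ` is fixed), let `ν` be the canonical valuation
of `ℂ((Γ))` (`ν f = f.order` for `f ≠ 0`), and let `Ω¹_top = (R ⊗ R)/M_FD` be the topological
Kähler differentials, defined by formal partial differentiation `D` with respect to `e`.
For a top differential form `ω = f · d¹y₁ ∧ ⋯ ∧ d¹y_n` where `ν(y₁), …, ν(y_n)` is a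
`ℚ`-basis of `Γ`, setting `ν(ω) := ν(f) + ν(y₁) + ⋯ + ν(y_n)` is independent of all choices,
and the resulting valuation on top forms satisfies `ν(ω₁+ω₂) ≥ min (ν ω₁) (ν ω₂)` and
`ν(g·ω) = ν(g) + ν(ω)`. -/
theorem valuation_of_top_forms_well_defined {n : ℕ}
    (e : Γ ≃ₗ[ℚ] (Fin n → ℚ))
    (D : Fin n → LaurentField Γ → LaurentField Γ)
    (hD : ∀ (i : Fin n) (f : LaurentField Γ) (γ : Γ),
      (D i f).coeff γ = ((e γ i + 1 : ℚ) : ℂ) * f.coeff (γ + e.symm (Pi.single i 1)))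
    (MFD : @Submodule (LaurentField Γ) (TensorSq Γ) _
      (@AddCommGroup.toAddCommMonoid _ inferInstance) inferInstance)
    (hMFD : MFD = Submodule.span (LaurentField Γ)
      {x | ∃ f : LaurentField Γ, x = 1 ⊗ₜ[ℂ] f -
        ∑ i : Fin n, (D i f) ⊗ₜ[ℂ] (HahnSeries.single (e.symm (Pi.single i 1)) (1 : ℂ))}) :
    -- well-definedness: the value does not depend on the chosen ℚ-basis nor on the elements
    (∀ (f g : LaurentField Γ) (y y' : Fin n → LaurentField Γ),
      Admissible y → Admissible y' →
      f • topForm MFD y = g • topForm MFD y' →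
      ((f = 0 ∧ g = 0) ∨
        (f ≠ 0 ∧ g ≠ 0 ∧
          f.order + ∑ i, (y i).order = g.order + ∑ i, (y' i).order))) ∧
    -- the valuation on top differential forms and its properties
    ∃ N : ExteriorAlgebra (LaurentField Γ) (TensorSq Γ ⧸ MFD) → WithTop Γ,
      N 0 = ⊤ ∧
      (∀ (f : LaurentField Γ) (y : Fin n → LaurentField Γ), Admissible y → f ≠ 0 →
        N (f • topForm MFD y) = ((f.order + ∑ i, (y i).order : Γ) : WithTop Γ)) ∧
      (∀ ω₁ ω₂ : ExteriorAlgebra (LaurentField Γ) (TensorSq Γ ⧸ MFD),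
        ω₁ ∈ Submodule.span (LaurentField Γ)
          {x | ∃ y : Fin n → LaurentField Γ, Admissible y ∧ x = topForm MFD y} →
        ω₂ ∈ Submodule.span (LaurentField Γ)
          {x | ∃ y : Fin n → LaurentField Γ, Admissible y ∧ x = topForm MFD y} →
        min (N ω₁) (N ω₂) ≤ N (ω₁ + ω₂)) ∧
      (∀ (g : LaurentField Γ) (ω : ExteriorAlgebra (LaurentField Γ) (TensorSq Γ ⧸ MFD)),
        ω ∈ Submodule.span (LaurentField Γ)
          {x | ∃ y : Fin n → LaurentField Γ, Admissible y ∧ x = topForm MFD y} →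
        g ≠ 0 → N (g • ω) = (g.order : WithTop Γ) + N ω) := by
  have hD' : IsFormalPartialDeriv e D := hD
  have hker : MFD ≤ LinearMap.ker hD'.gradient := hMFD ▸ hD'.span_le_ker_gradient
  refine ⟨fun f g y y' hy hy' heq => ?_, hD'.formValuation MFD hker,
    hD'.formValuation_zero MFD hker, fun f y hy hf => ?_,
    fun ω₁ ω₂ _ _ => hD'.min_formValuation_le_add MFD hker ω₁ ω₂, fun g ω _ hg => ?_⟩
  · have h : f.orderTop + ((∑ i, (y i).order : Γ) : WithTop Γ) =
        g.orderTop + ((∑ i, (y' i).order : Γ) : WithTop Γ) := by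
      rw [← hD'.formValuation_smul_topForm MFD hker f hy, heq,
        hD'.formValuation_smul_topForm MFD hker g hy']
    by_cases hf : f = 0
    · exact .inl ⟨hf, (eq_zero_iff_of_orderTop_add_eq h).mp hf⟩
    have hg : g ≠ 0 := (eq_zero_iff_of_orderTop_add_eq h).not.mp hf
    rw [← order_eq_orderTop_of_ne_zero hf, ← order_eq_orderTop_of_ne_zero hg, ← WithTop.coe_add,
      ← WithTop.coe_add, WithTop.coe_inj] at h
    exact .inr ⟨hf, hg, h⟩
  · rw [hD'.formValuation_smul_topForm MFD hker f hy, ← order_eq_orderTop_of_ne_zero hf,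
      WithTop.coe_add]
  · rw [hD'.formValuation_smul, order_eq_orderTop_of_ne_zero hg]

end
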